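/- arXiv:nlin/0411044 — 2 statements merged into one kernel-verified Lean document; each statement's English description precedes it below -/
import Mathlib

section
/- Combinatorial reflection equation at the right end for κ = Switch_{12} (Proposition 2.2, equation (2.10)): for every even n ≥ 4, all l, m ≥ 0, all d, e ∈ ℤ and all x ∈ B_l, y ∈ B_m, the two composite maps K₂ ∘ R∨ ∘ K₂ ∘ R and R∨∨ ∘ K₂ ∘ R∨ ∘ K₂, both from Aff(B_l)⊗Aff(B_m) to Aff(B∨_l)⊗Aff(B∨_m), take the same value on z^d x ⊗ z^e y. -/
/- Common setup: crystals `B_l`, `B∨_l` for `U_q(sl_n^)`, combinatorial `R`, `R∨`, `R∨∨`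
and the combinatorial `K` maps, following Kuniba–Okado–Yamada,
"Box-Ball System with Reflecting End".  Elements of `B_l` (and of `B∨_l`) are encoded as
integer-valued vectors indexed by `ZMod n` (coordinates read modulo `n`), membership in
`B_l` being expressed by the predicate `memB l`.  The affinization `Aff(B_l)` is encoded
as `ℤ × (ZMod n → ℤ)`, the pair `(d, x)` standing for `z^d x`. -/

namespace BBS

abbrev V (n : ℕ) := ZMod n → ℤ

variable {n : ℕ}

/-- The candidate (for `k+1`, `0 ≤ k ≤ n-1`) in the minimum defining `Q_i(x,y)`:
`Σ_{j=1}^{k} x_{i+j} + Σ_{j=k+2}^{n} y_{i+j}`. -/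
def Qt (x y : V n) (i : ZMod n) (k : ℕ) : ℤ :=
  (∑ j ∈ Finset.range k, x (i + (j : ZMod n) + 1)) +
    ∑ j ∈ Finset.Ico (k + 1) n, y (i + (j : ZMod n) + 1)

/-- `Qe x y i = Q_i(x,y) = min_{1 ≤ k ≤ n} ( Σ_{j=1}^{k−1} x_{i+j} + Σ_{j=k+1}^{n} y_{i+j} )`. -/
def Qe (x y : V n) (i : ZMod n) : ℤ :=
  Finset.fold min (Qt x y i 0) (Qt x y i) (Finset.Ico 1 n)

/-- `Pe x y i = P_i(x,y) = min(x_{i+1}, y_{i+1})`. -/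
def Pe (x y : V n) (i : ZMod n) : ℤ := min (x (i + 1)) (y (i + 1))

/-- Classical combinatorial `R : B_l ⊗ B_m → B_m ⊗ B_l`, `(x,y) ↦ (ỹ,x̃)`. -/
def Rbar (x y : V n) : V n × V n :=
  (fun i => y i + Qe x y (i - 1) - Qe x y i, fun i => x i + Qe x y i - Qe x y (i - 1))

/-- Classical combinatorial `R∨ : B_l ⊗ B∨_m → B∨_m ⊗ B_l`, `(x,y) ↦ (ỹ,x̃)`. -/
def Rvbar (x y : V n) : V n × V n :=
  (fun i => y i + Pe x y i - Pe x y (i - 1), fun i => x i + Pe x y i - Pe x y (i - 1))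

/-- Classical combinatorial `R∨∨ : B∨_l ⊗ B∨_m → B∨_m ⊗ B∨_l`, `(x,y) ↦ (ỹ,x̃)`. -/
def Rvvbar (x y : V n) : V n × V n :=
  (fun i => y i + Qe y x i - Qe y x (i - 1), fun i => x i + Qe y x (i - 1) - Qe y x i)

/-- The affinization: `(d, x)` stands for `z^d x`. -/
abbrev Aff (n : ℕ) := ℤ × V n

/-- Affine combinatorial `R`: `z^d x ⊗ z^e y ↦ z^{e−Q₀(x,y)} ỹ ⊗ z^{d+Q₀(x,y)} x̃`. -/
def Raff (p : Aff n × Aff n) : Aff n × Aff n :=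
  ((p.2.1 - Qe p.1.2 p.2.2 0, (Rbar p.1.2 p.2.2).1),
    (p.1.1 + Qe p.1.2 p.2.2 0, (Rbar p.1.2 p.2.2).2))

/-- Affine combinatorial `R∨`: `z^d x ⊗ z^e y ↦ z^{e−P₀(x,y)} ỹ ⊗ z^{d+P₀(x,y)} x̃`. -/
def Rvee (p : Aff n × Aff n) : Aff n × Aff n :=
  ((p.2.1 - Pe p.1.2 p.2.2 0, (Rvbar p.1.2 p.2.2).1),
    (p.1.1 + Pe p.1.2 p.2.2 0, (Rvbar p.1.2 p.2.2).2))

/-- Affine combinatorial `R∨∨`: `z^d x ⊗ z^e y ↦ z^{e−Q₀(y,x)} ỹ ⊗ z^{d+Q₀(y,x)} x̃`. -/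
def Rvv (p : Aff n × Aff n) : Aff n × Aff n :=
  ((p.2.1 - Qe p.2.2 p.1.2 0, (Rvvbar p.1.2 p.2.2).1),
    (p.1.1 + Qe p.2.2 p.1.2 0, (Rvvbar p.1.2 p.2.2).2))

/-- `κ =` Rotateleft: `κ(x) = (x_2, …, x_n, x_1)`. -/
def rotL (x : V n) : V n := fun i => x (i + 1)

/-- `I` for Rotateleft: `I(x) = −x_1`. -/
def Irot (x : V n) : ℤ := -x 1

/-- `κ =` Switch₁ₙ (`n` even): exchanges the coordinate pairs
`(x_1,x_n), (x_2,x_3), (x_4,x_5), …, (x_{n−2},x_{n−1})`. -/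
def sw1n (x : V n) : V n := fun i => if i.val % 2 = 1 then x (i - 1) else x (i + 1)

/-- `I` for Switch₁ₙ: `I(x) = x_n − x_1`. -/
def I1n (x : V n) : ℤ := x 0 - x 1

/-- `κ =` Switch₁₂ (`n` even): exchanges the coordinate pairs
`(x_1,x_2), (x_3,x_4), …, (x_{n−1},x_n)`. -/
def sw12 (x : V n) : V n := fun i => if i.val % 2 = 1 then x (i + 1) else x (i - 1)

/-- `I` for Switch₁₂: `I(x) = 0`. -/
def I12 (_ : V n) : ℤ := 0

/-- Combinatorial `K : Aff(B_l) → Aff(B∨_l)`, `z^d x ↦ z^{−d+I(x)} κ(x)`. -/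
def Kmap (κ : V n → V n) (I : V n → ℤ) (q : Aff n) : Aff n := (-q.1 + I q.2, κ q.2)

/-- Combinatorial `K∨ : Aff(B∨_l) → Aff(B_l)`, `z^d x ↦ z^{−d−I(x)} κ(x)`. -/
def Kvmap (κ : V n → V n) (I : V n → ℤ) (q : Aff n) : Aff n := (-q.1 - I q.2, κ q.2)

/-- `K₂`: apply `K` to the second tensor factor. -/
def K2 (κ : V n → V n) (I : V n → ℤ) (p : Aff n × Aff n) : Aff n × Aff n :=
  (p.1, Kmap κ I p.2)

/-- `K∨₁`: apply `K∨` to the first tensor factor. -/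
def Kv1 (κ : V n → V n) (I : V n → ℤ) (p : Aff n × Aff n) : Aff n × Aff n :=
  (Kvmap κ I p.1, p.2)

/-- `x ∈ B_l` (equivalently `x ∈ B∨_l`): all coordinates nonnegative, summing to `l`. -/
def memB (l : ℕ) (x : V n) : Prop :=
  (∀ i, 0 ≤ x i) ∧ (∑ j ∈ Finset.range n, x (j : ZMod n)) = (l : ℤ)

end BBS

namespace BBS

/-! auxiliary development -/

lemma val_mod2 (hev : 2 ∣ n) (hn : 0 < n) (r : ℕ) :
    ((r : ZMod n)).val % 2 = r % 2 := by
  haveI : NeZero n := ⟨by omega⟩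
  rw [ZMod.val_natCast, Nat.mod_mod_of_dvd _ hev]

lemma add_nat_val_mod2 (hev : 2 ∣ n) (hn : 0 < n) (i : ZMod n) (c : ℕ) :
    ((i + (c : ZMod n)).val) % 2 = (i.val + c) % 2 := by
  haveI : NeZero n := ⟨by omega⟩
  have h : i + (c : ZMod n) = ((i.val + c : ℕ) : ZMod n) := by
    push_cast [ZMod.natCast_val, ZMod.cast_id]
    rfl
  rw [h, val_mod2 hev hn]

lemma sub_one_val_mod2 (hev : 2 ∣ n) (hn : 0 < n) (i : ZMod n) :
    ((i - 1).val) % 2 = (i.val + 1) % 2 := by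
  haveI : NeZero n := ⟨by omega⟩
  have h1 : i - 1 = i + ((n - 1 : ℕ) : ZMod n) := by
    have : ((n : ℕ) : ZMod n) = 0 := ZMod.natCast_self n
    push_cast [Nat.cast_sub (by omega : 1 ≤ n), this]
    ring
  rw [h1, add_nat_val_mod2 hev hn]
  omega

lemma sw12_odd (z : V n) (i : ZMod n) (h : i.val % 2 = 1) : sw12 z i = z (i + 1) := by
  simp [sw12, h]

lemma sw12_even (z : V n) (i : ZMod n) (h : i.val % 2 = 0) : sw12 z i = z (i - 1) := by
  simp [sw12, h]

lemma sum_univ' [NeZero n] (f : ZMod n → ℤ) :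
    ∑ j ∈ Finset.range n, f (j : ZMod n) = ∑ i : ZMod n, f i := by
  refine Finset.sum_bij' (fun j _ => (j : ZMod n)) (fun i _ => i.val) ?_ ?_ ?_ ?_ ?_
  · intro a _; exact Finset.mem_univ _
  · intro a _; exact Finset.mem_range.2 (ZMod.val_lt a)
  · intro a ha; exact ZMod.val_natCast_of_lt (Finset.mem_range.1 ha)
  · intro a _; exact ZMod.natCast_rightInverse a
  · intro a _; rfl

/-- cyclic sum invariance -/
lemma sum_shift (hn : 0 < n) (f : ZMod n → ℤ) (c : ZMod n) :
    ∑ j ∈ Finset.range n, f (c + (j : ZMod n)) = ∑ j ∈ Finset.range n, f (j : ZMod n) := by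
  haveI : NeZero n := ⟨by omega⟩
  rw [sum_univ' (fun j => f (c + j)), sum_univ' f]
  exact Equiv.sum_comp (Equiv.addLeft c) f


/-- total sum -/
def Sv (x : V n) : ℤ := ∑ j ∈ Finset.range n, x (j : ZMod n)

lemma Qt_step (x y : V n) (i : ZMod n) (k : ℕ) (hk : k + 1 < n) :
    Qt x y i (k + 1) = Qt x y i k + x (i + (k : ZMod n) + 1) - y (i + (k : ZMod n) + 2) := by
  unfold Qt
  rw [Finset.sum_range_succ]
  have h2 := Finset.sum_eq_sum_Ico_succ_bot (by omega : k + 1 < n)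
    (fun j => y (i + (j : ZMod n) + 1))
  rw [h2]
  have e1 : i + ((k+1 : ℕ) : ZMod n) + 1 = i + (k : ZMod n) + 2 := by push_cast; ring
  rw [e1]
  ring

lemma Qt_zero (hn : 0 < n) (x y : V n) (i : ZMod n) :
    Qt x y i 0 = Sv y - y (i + 1) := by
  unfold Qt Sv
  have h0 : Finset.range n = Finset.Ico 0 n := by rw [Finset.range_eq_Ico]
  have h2 := Finset.sum_eq_sum_Ico_succ_bot (by omega : 0 < n)
    (fun j => y (i + (j : ZMod n) + 1))
  have h := sum_shift hn y (i + 1)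
  have e1 : ∀ j : ℕ, y (i + (j : ZMod n) + 1) = y ((i+1) + (j : ZMod n)) := by
    intro j; ring_nf
  simp only [e1] at h2 ⊢
  rw [show ∑ j ∈ Finset.Ico (0+1) n, y (i + 1 + (j : ZMod n)) =
      ∑ j ∈ Finset.Ico 0 n, y (i + 1 + (j : ZMod n)) - y (i + 1 + ((0:ℕ) : ZMod n)) by
    rw [h2]; ring]
  rw [← h0, h]
  simp

lemma Qt_last (hn : 0 < n) (x y : V n) (i : ZMod n) :
    Qt x y i (n - 1) = Sv x - x i := by
  unfold Qt Sv
  have h1 : Finset.Ico (n - 1 + 1) n = ∅ := by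
    rw [Finset.Ico_eq_empty_iff]; omega
  rw [h1]
  have h2 : n = (n-1) + 1 := by omega
  have h3 : ∑ j ∈ Finset.range n, x ((j : ZMod n)) =
      ∑ j ∈ Finset.range (n-1), x (i + (j:ZMod n) + 1) + x i := by
    have h := sum_shift hn x (i + 1)
    have e1 : ∀ j : ℕ, x (i + (j : ZMod n) + 1) = x ((i+1) + (j : ZMod n)) := by
      intro j; ring_nf
    have hs := Finset.sum_range_succ (fun j => x ((i+1) + ((j:ℕ):ZMod n))) (n-1)
    rw [← h2] at hs
    calc ∑ j ∈ Finset.range n, x ((j : ZMod n)) = ∑ j ∈ Finset.range n, x ((i+1) + (j : ZMod n)) := h.symm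
    _ = ∑ j ∈ Finset.range (n-1), x ((i+1) + (j:ZMod n)) + x ((i+1) + ((n-1 : ℕ):ZMod n)) := hs
    _ = ∑ j ∈ Finset.range (n-1), x (i + (j:ZMod n) + 1) + x i := by
        simp only [← e1]
        congr 1
        have : ((n - 1 : ℕ) : ZMod n) = -1 := by
          have : ((n : ℕ) : ZMod n) = 0 := ZMod.natCast_self n
          push_cast [Nat.cast_sub (by omega : 1 ≤ n), this]; ring
        rw [this]; ring_nf
  simp only [Finset.sum_empty, add_zero]
  omega

lemma Qt_shift (hn : 0 < n) (x y : V n) (i : ZMod n) (k : ℕ) (hk : k + 1 < n) :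
    Qt x y (i + 1) k = Qt x y i (k + 1) - x (i + 1) + y (i + 1) := by
  induction k with
  | zero =>
    rw [Qt_zero hn x y (i+1), Qt_step x y i 0 hk, Qt_zero hn x y i]
    push_cast
    ring_nf
  | succ k ih =>
    have h1 : k + 1 < n := by omega
    rw [Qt_step x y (i+1) k (by omega), ih h1, Qt_step x y i (k+1) (by omega)]
    push_cast
    ring_nf

lemma Qe_le (x y : V n) (i : ZMod n) (k : ℕ) (hk : k < n) : Qe x y i ≤ Qt x y i k := by
  rw [Qe, Finset.fold_min_le]
  rcases Nat.eq_zero_or_pos k with h | h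
  · left; rw [h]
  · right; exact ⟨k, Finset.mem_Ico.2 ⟨h, hk⟩, le_rfl⟩

lemma le_Qe (x y : V n) (i : ZMod n) (c : ℤ) (h : ∀ k, k < n → c ≤ Qt x y i k) (hn : 0 < n) :
    c ≤ Qe x y i := by
  rw [Qe, Finset.le_fold_min]
  exact ⟨h 0 hn, fun k hk => h k (Finset.mem_Ico.1 hk).2⟩

lemma Qe_achieves (x y : V n) (i : ZMod n) (hn : 0 < n) :
    ∃ k, k < n ∧ Qt x y i k ≤ Qe x y i := by
  have h : Qe x y i ≤ Qe x y i := le_rfl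
  rw [Qe, Finset.fold_min_le] at h
  rcases h with h | ⟨k, hk, hle⟩
  · exact ⟨0, hn, h⟩
  · exact ⟨k, (Finset.mem_Ico.1 hk).2, hle⟩

/-! u, v and the closed form -/

def qq (x y : V n) (i : ZMod n) : ℤ := Pe x (sw12 y) i

def ub (x y : V n) : V n := fun i => sw12 y i + qq x y i - qq x y (i - 1)

def vb (x y : V n) : V n := fun i => x i + qq x y i - qq x y (i - 1)

def Cc (x y : V n) (i : ZMod n) : ℤ :=
  x i - x (i + 1) - y i + y (i + 1) + 2 * qq x y i - qq x y (i - 1) - qq x y (i + 1)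

def Ecor (x y : V n) (i : ZMod n) (k : ℕ) : ℤ :=
  (if i.val % 2 = 1 then Cc x y i else 0) +
  (if (i.val + k) % 2 = 0 then
      y (i + (k : ZMod n) + 1) - y (i + (k : ZMod n) + 2)
        + qq x y (i + (k : ZMod n)) - qq x y (i + (k : ZMod n) + 1)
   else
      x (i + (k : ZMod n) + 1) - x (i + (k : ZMod n))
        + qq x y (i + (k : ZMod n) - 1) - qq x y (i + (k : ZMod n)))

lemma parity_add_one (hev : 2 ∣ n) (hn : 0 < n) (j : ZMod n) :
    (j + 1).val % 2 = (j.val + 1) % 2 := by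
  have := add_nat_val_mod2 hev hn j 1
  simpa using this

lemma sw12_involutive (hev : 2 ∣ n) (hn : 0 < n) (j : ZMod n) :
    (fun i : ZMod n => if i.val % 2 = 1 then i + 1 else i - 1)
      ((fun i : ZMod n => if i.val % 2 = 1 then i + 1 else i - 1) j) = j := by
  by_cases h : j.val % 2 = 1
  · simp only [h, if_pos]
    have h2 : (j + 1).val % 2 = 0 := by rw [parity_add_one hev hn]; omega
    simp [h2]
  · simp only [h, if_neg, if_false]
    have h2 : (j - 1).val % 2 = 1 := by rw [sub_one_val_mod2 hev hn]; omega
    simp [h2]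

lemma sum_sw12 (hev : 2 ∣ n) (hn : 0 < n) (y : V n) : Sv (sw12 y) = Sv y := by
  haveI : NeZero n := ⟨by omega⟩
  unfold Sv
  rw [sum_univ' (fun j => sw12 y j), sum_univ' y]
  have hinv : Function.Involutive
      (fun i : ZMod n => if i.val % 2 = 1 then i + 1 else i - 1) :=
    fun j => sw12_involutive hev hn j
  have : ∀ j : ZMod n, sw12 y j
      = y ((fun i : ZMod n => if i.val % 2 = 1 then i + 1 else i - 1) j) := by
    intro j; by_cases h : j.val % 2 = 1 <;> simp [sw12, h]
  simp only [this]
  exact Equiv.sum_comp (Function.Involutive.toPerm _ hinv) y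

lemma sum_tele (hn : 0 < n) (g : ZMod n → ℤ) :
    ∑ j ∈ Finset.range n, (g (j : ZMod n) - g ((j : ZMod n) - 1)) = 0 := by
  rw [Finset.sum_sub_distrib]
  have h := sum_shift hn (fun j => g (j - 1)) 1
  have e1 : ∀ j : ZMod n, g (1 + j - 1) = g j := by intro j; ring_nf
  simp only [e1] at h
  rw [← h]
  ring

lemma sum_ub (hev : 2 ∣ n) (hn : 0 < n) (x y : V n) : Sv (ub x y) = Sv y := by
  unfold Sv ub
  have e : ∀ j : ℕ, sw12 y ((j:ZMod n)) + qq x y ((j:ZMod n)) - qq x y ((j:ZMod n) - 1)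
      = sw12 y ((j:ZMod n)) + (qq x y ((j:ZMod n)) - qq x y ((j:ZMod n) - 1)) := by
    intro j; ring
  simp only [e]
  rw [Finset.sum_add_distrib, sum_tele hn (qq x y)]
  have h := sum_sw12 hev hn y
  unfold Sv at h
  rw [h]; ring

lemma sum_vb (hn : 0 < n) (x y : V n) : Sv (vb x y) = Sv x := by
  unfold Sv vb
  have : ∀ j : ℕ, x ((j:ZMod n)) + qq x y ((j:ZMod n)) - qq x y ((j:ZMod n) - 1)
      = x ((j:ZMod n)) + (qq x y ((j:ZMod n)) - qq x y ((j:ZMod n) - 1)) := by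
    intro j; ring
  simp only [this]
  rw [Finset.sum_add_distrib, sum_tele hn (qq x y)]
  ring

/-- The key closed form for `Qt` of the transformed pair. -/
lemma Tform (hev : 2 ∣ n) (hn2 : 2 ≤ n) (x y : V n) (i : ZMod n) (k : ℕ) (hk : k < n) :
    Qt (sw12 (vb x y)) (ub x y) i k = Qt x y i k + Ecor x y i k := by
  have hn : 0 < n := by omega
  induction k with
  | zero =>
    rw [Qt_zero hn, Qt_zero hn, sum_ub hev hn]
    simp only [Ecor, Nat.add_zero, Nat.cast_zero, add_zero]
    by_cases h : i.val % 2 = 1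
    · have h1 : (i + 1).val % 2 = 0 := by rw [parity_add_one hev hn]; omega
      rw [if_pos h, if_neg (by omega)]
      unfold ub
      rw [sw12_even y (i+1) h1]
      unfold Cc
      have e : i + 1 - 1 = i := by ring
      rw [e]
      ring
    · have h1 : (i + 1).val % 2 = 1 := by rw [parity_add_one hev hn]; omega
      rw [if_neg h, if_pos (by omega)]
      unfold ub
      rw [sw12_odd y (i+1) h1]
      have e : i + 1 + 1 = i + 2 := by ring
      rw [e]
      ring
  | succ k ih =>
    have hk' : k < n := by omega
    have ihh := ih hk'
    rw [Qt_step _ _ i k hk, Qt_step _ _ i k hk, ihh]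
    -- now need: Ecor (k+1) - Ecor k = svb(i+k+1) - ub(i+k+2) - (x(i+k+1) - y(i+k+2))
    have hp1 : (i + (k : ZMod n) + 1).val % 2 = (i.val + k + 1) % 2 := by
      have := add_nat_val_mod2 hev hn i (k+1)
      have e : i + ((k+1 : ℕ) : ZMod n) = i + (k:ZMod n) + 1 := by push_cast; ring
      rw [e] at this
      omega
    have hp2 : (i + (k : ZMod n) + 2).val % 2 = (i.val + k) % 2 := by
      have := add_nat_val_mod2 hev hn i (k+2)
      have e : i + ((k+2 : ℕ) : ZMod n) = i + (k:ZMod n) + 2 := by push_cast; ring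
      rw [e] at this
      omega
    have ecast : ∀ z : V n, z (i + ((k+1:ℕ) : ZMod n)) = z (i + (k:ZMod n) + 1) := by
      intro z; congr 1; push_cast; ring
    unfold Ecor
    by_cases h : (i.val + k) % 2 = 0
    · -- i+k even, i+k+1 odd
      have h1 : (i + (k:ZMod n) + 1).val % 2 = 1 := by omega
      have h2 : (i + (k:ZMod n) + 2).val % 2 = 0 := by omega
      rw [sw12_odd (vb x y) _ h1]
      unfold vb ub
      rw [sw12_even y _ h2]
      rw [if_pos h, if_neg (by omega : ¬ (i.val + (k+1)) % 2 = 0)]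
      have E1 : ∀ z : ZMod n → ℤ, z (i + ((k+1:ℕ) : ZMod n)) = z (i + (k:ZMod n) + 1) := by
        intro z; congr 1; push_cast; ring
      have E2 : ∀ z : ZMod n → ℤ, z (i + ((k+1:ℕ) : ZMod n) + 1) = z (i + (k:ZMod n) + 2) := by
        intro z; congr 1; push_cast; ring
      have E3 : ∀ z : ZMod n → ℤ, z (i + ((k+1:ℕ) : ZMod n) + 2) = z (i + (k:ZMod n) + 3) := by
        intro z; congr 1; push_cast; ring
      have E4 : ∀ z : ZMod n → ℤ, z (i + ((k+1:ℕ) : ZMod n) - 1) = z (i + (k:ZMod n)) := by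
        intro z; congr 1; push_cast; ring
      have E5 : ∀ z : ZMod n → ℤ, z (i + (k:ZMod n) + 1 + 1) = z (i + (k:ZMod n) + 2) := by
        intro z; congr 1; ring
      have E6 : ∀ z : ZMod n → ℤ, z (i + (k:ZMod n) + 1 - 1) = z (i + (k:ZMod n)) := by
        intro z; congr 1; ring
      have E7 : ∀ z : ZMod n → ℤ, z (i + (k:ZMod n) + 2 - 1) = z (i + (k:ZMod n) + 1) := by
        intro z; congr 1; ring
      have E8 : ∀ z : ZMod n → ℤ, z (i + (k:ZMod n) + 2 + 1) = z (i + (k:ZMod n) + 3) := by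
        intro z; congr 1; ring
      simp only [E1, E2, E3, E4, E5, E6, E7, E8]
      ring
    · -- i+k odd, i+k+1 even
      have h1 : (i + (k:ZMod n) + 1).val % 2 = 0 := by omega
      have h2 : (i + (k:ZMod n) + 2).val % 2 = 1 := by omega
      rw [sw12_even (vb x y) _ h1]
      unfold vb ub
      rw [sw12_odd y _ h2]
      rw [if_neg h, if_pos (by omega : (i.val + (k+1)) % 2 = 0)]
      have E1 : ∀ z : ZMod n → ℤ, z (i + ((k+1:ℕ) : ZMod n)) = z (i + (k:ZMod n) + 1) := by
        intro z; congr 1; push_cast; ring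
      have E2 : ∀ z : ZMod n → ℤ, z (i + ((k+1:ℕ) : ZMod n) + 1) = z (i + (k:ZMod n) + 2) := by
        intro z; congr 1; push_cast; ring
      have E3 : ∀ z : ZMod n → ℤ, z (i + ((k+1:ℕ) : ZMod n) + 2) = z (i + (k:ZMod n) + 3) := by
        intro z; congr 1; push_cast; ring
      have E4 : ∀ z : ZMod n → ℤ, z (i + ((k+1:ℕ) : ZMod n) - 1) = z (i + (k:ZMod n)) := by
        intro z; congr 1; push_cast; ring
      have E5 : ∀ z : ZMod n → ℤ, z (i + (k:ZMod n) + 1 + 1) = z (i + (k:ZMod n) + 2) := by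
        intro z; congr 1; ring
      have E6 : ∀ z : ZMod n → ℤ, z (i + (k:ZMod n) + 1 - 1) = z (i + (k:ZMod n)) := by
        intro z; congr 1; ring
      have E7 : ∀ z : ZMod n → ℤ, z (i + (k:ZMod n) + 2 - 1) = z (i + (k:ZMod n) + 1) := by
        intro z; congr 1; ring
      have E8 : ∀ z : ZMod n → ℤ, z (i + (k:ZMod n) + 2 + 1) = z (i + (k:ZMod n) + 3) := by
        intro z; congr 1; ring
      simp only [E1, E2, E3, E4, E5, E6, E7, E8]
      ring

/-! qq evaluation, block lemma, even-index Q'' identity, Q-recursion -/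

lemma qq_even (x y : V n) (hev : 2 ∣ n) (hn : 0 < n) (j : ZMod n) (h : j.val % 2 = 0) :
    qq x y j = min (x (j + 1)) (y (j + 2)) := by
  unfold qq Pe
  have h1 : (j + 1).val % 2 = 1 := by rw [parity_add_one hev hn]; omega
  rw [sw12_odd y _ h1]
  congr 1
  ring

lemma qq_odd (x y : V n) (hev : 2 ∣ n) (hn : 0 < n) (j : ZMod n) (h : j.val % 2 = 1) :
    qq x y j = min (x (j + 1)) (y j) := by
  unfold qq Pe
  have h1 : (j + 1).val % 2 = 0 := by rw [parity_add_one hev hn]; omega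
  rw [sw12_even y _ h1]
  congr 1
  ring

lemma block_min (hev : 2 ∣ n) (hn2 : 2 ≤ n) (x y : V n) (i : ZMod n) (k : ℕ)
    (hk : k + 1 < n) (hpk : (i.val + k) % 2 = 0) :
    min (Qt (sw12 (vb x y)) (ub x y) i k) (Qt (sw12 (vb x y)) (ub x y) i (k + 1)) =
      (if i.val % 2 = 1 then Cc x y i else 0) + min (Qt x y i k) (Qt x y i (k + 1)) := by
  have hn : 0 < n := by omega
  rw [Tform hev hn2 x y i k (by omega), Tform hev hn2 x y i (k+1) hk,
    Qt_step x y i k hk]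
  unfold Ecor
  rw [if_pos hpk, if_neg (by omega : ¬ (i.val + (k+1)) % 2 = 0)]
  have hj : (i + (k : ZMod n)).val % 2 = 0 := by
    have := add_nat_val_mod2 hev hn i k; omega
  have hj1 : (i + (k : ZMod n) + 1).val % 2 = 1 := by
    rw [parity_add_one hev hn]; omega
  have E1 : ∀ z : ZMod n → ℤ, z (i + ((k+1:ℕ) : ZMod n)) = z (i + (k:ZMod n) + 1) := by
    intro z; congr 1; push_cast; ring
  have E2 : ∀ z : ZMod n → ℤ, z (i + ((k+1:ℕ) : ZMod n) + 1) = z (i + (k:ZMod n) + 2) := by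
    intro z; congr 1; push_cast; ring
  have E4 : ∀ z : ZMod n → ℤ, z (i + ((k+1:ℕ) : ZMod n) - 1) = z (i + (k:ZMod n)) := by
    intro z; congr 1; push_cast; ring
  simp only [E1, E2, E4]
  rw [qq_even x y hev hn _ hj, qq_odd x y hev hn _ hj1]
  have e5 : i + (k:ZMod n) + 1 + 1 = i + (k:ZMod n) + 2 := by ring
  rw [e5]
  rcases le_total (x (i + (k:ZMod n) + 1)) (y (i + (k:ZMod n) + 2)) with h1 | h1 <;>
    rcases le_total (x (i + (k:ZMod n) + 2)) (y (i + (k:ZMod n) + 1)) with h2 | h2 <;>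
    simp only [min_def] <;> split_ifs <;> omega

/-- `F2`: at even `i`, the transformed `Qe` agrees with `Qe x y i`. -/
lemma Qpp_even (hev : 2 ∣ n) (hn2 : 2 ≤ n) (x y : V n) (i : ZMod n) (hi : i.val % 2 = 0) :
    Qe (sw12 (vb x y)) (ub x y) i = Qe x y i := by
  have hn : 0 < n := by omega
  have key : ∀ k, k < n → ∃ t, t + 1 < n ∧ (i.val + t) % 2 = 0 ∧ (k = t ∨ k = t + 1) := by
    intro k hk
    rcases Nat.even_or_odd k with he | ho
    · refine ⟨k, ?_, ?_, Or.inl rfl⟩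
      · rcases hev with ⟨m, hm⟩
        rcases he with ⟨a, ha⟩
        omega
      · rcases he with ⟨a, ha⟩; omega
    · refine ⟨k - 1, by omega, ?_, Or.inr (by rcases ho with ⟨a,ha⟩; omega)⟩
      rcases ho with ⟨a, ha⟩; omega
  apply le_antisymm
  · apply le_Qe _ _ _ _ _ hn
    intro k hk
    obtain ⟨t, ht1, ht2, ht3⟩ := key k hk
    have hb := block_min hev hn2 x y i t ht1 ht2
    rw [if_neg (by omega), zero_add] at hb
    have h1 : Qe (sw12 (vb x y)) (ub x y) i ≤
        min (Qt (sw12 (vb x y)) (ub x y) i t) (Qt (sw12 (vb x y)) (ub x y) i (t+1)) :=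
      le_min (Qe_le _ _ _ _ (by omega)) (Qe_le _ _ _ _ ht1)
    rw [hb] at h1
    rcases ht3 with rfl | rfl
    · exact h1.trans (min_le_left _ _)
    · exact h1.trans (min_le_right _ _)
  · apply le_Qe _ _ _ _ _ hn
    intro k hk
    obtain ⟨t, ht1, ht2, ht3⟩ := key k hk
    have hb := block_min hev hn2 x y i t ht1 ht2
    rw [if_neg (by omega), zero_add] at hb
    have h1 : Qe x y i ≤ min (Qt x y i t) (Qt x y i (t+1)) :=
      le_min (Qe_le _ _ _ _ (by omega)) (Qe_le _ _ _ _ ht1)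
    rw [← hb] at h1
    rcases ht3 with rfl | rfl
    · exact h1.trans (min_le_left _ _)
    · exact h1.trans (min_le_right _ _)

/-- `F1` (Q-recursion): candidate-set identity. -/
lemma Qrec (hn2 : 2 ≤ n) (x y : V n) (i : ZMod n) :
    min (y (i+1) + Qe x y i) (x (i+2) + Qe x y (i+2)) =
      Qe x y (i+1) + min (x (i+1)) (y (i+2)) := by
  have hn : 0 < n := by omega
  have hB4 : ∀ (j : ZMod n) (k : ℕ), k + 1 < n →
      Qt x y (j + 1) k = Qt x y j (k + 1) - x (j + 1) + y (j + 1) :=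
    fun j k hk => Qt_shift hn x y j k hk
  apply le_antisymm
  · -- LHS ≤ RHS
    obtain ⟨k₀, hk₀, hle₀⟩ := Qe_achieves x y (i+1) hn
    have heq : Qt x y (i+1) k₀ = Qe x y (i+1) := le_antisymm hle₀ (Qe_le _ _ _ _ hk₀)
    have hA1 : min (y (i+1) + Qe x y i) (x (i+2) + Qe x y (i+2))
        ≤ Qt x y (i+1) k₀ + x (i+1) := by
      rcases Nat.lt_or_ge (k₀+1) n with hlt | hge
      · have := hB4 i k₀ hlt
        calc min _ _ ≤ y (i+1) + Qe x y i := min_le_left _ _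
        _ ≤ y (i+1) + Qt x y i (k₀+1) := by
            have := Qe_le x y i (k₀+1) hlt; omega
        _ = Qt x y (i+1) k₀ + x (i+1) := by rw [this]; ring
      · have hk0 : k₀ = n - 1 := by omega
        subst hk0
        rw [Qt_last hn x y (i+1)]
        calc min _ _ ≤ x (i+2) + Qe x y (i+2) := min_le_right _ _
        _ ≤ x (i+2) + Qt x y (i+2) (n-1) := by
            have := Qe_le x y (i+2) (n-1) (by omega); omega
        _ = Sv x := by rw [Qt_last hn x y (i+2)]; ring
        _ = Sv x - x (i+1) + x (i+1) := by ring
    have hA2 : min (y (i+1) + Qe x y i) (x (i+2) + Qe x y (i+2))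
        ≤ Qt x y (i+1) k₀ + y (i+2) := by
      rcases Nat.eq_zero_or_pos k₀ with h0 | hpos
      · subst h0
        rw [Qt_zero hn x y (i+1)]
        have e0 : i + 1 + 1 = i + 2 := by ring
        rw [e0]
        calc min _ _ ≤ y (i+1) + Qe x y i := min_le_left _ _
        _ ≤ y (i+1) + Qt x y i 0 := by have := Qe_le x y i 0 hn; omega
        _ = Sv y := by rw [Qt_zero hn x y i]; ring
        _ = Sv y - y (i+2) + y (i+2) := by ring
      · have hr : Qt x y (i+1+1) (k₀-1) = Qt x y (i+1) (k₀-1+1) - x (i+1+1) + y (i+1+1) :=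
          hB4 (i+1) (k₀-1) (by omega)
        have e1 : k₀ - 1 + 1 = k₀ := by omega
        rw [e1] at hr
        have e2 : i + 1 + 1 = i + 2 := by ring
        rw [e2] at hr
        calc min _ _ ≤ x (i+2) + Qe x y (i+2) := min_le_right _ _
        _ ≤ x (i+2) + Qt x y (i+2) (k₀-1) := by
            have := Qe_le x y (i+2) (k₀-1) (by omega); omega
        _ = Qt x y (i+1) k₀ + y (i+2) := by rw [hr]; ring
    rw [← heq]
    rcases le_total (x (i+1)) (y (i+2)) with h | h
    · rw [min_eq_left h]; exact hA1
    · rw [min_eq_right h]; exact hA2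
  · -- RHS ≤ LHS
    obtain ⟨k₁, hk₁, hle₁⟩ := Qe_achieves x y i hn
    obtain ⟨k₂, hk₂, hle₂⟩ := Qe_achieves x y (i+2) hn
    have hR1 : Qe x y (i+1) + min (x (i+1)) (y (i+2)) ≤ y (i+1) + Qt x y i k₁ := by
      rcases Nat.eq_zero_or_pos k₁ with h0 | hpos
      · subst h0
        rw [Qt_zero hn x y i]
        have h1 : Qe x y (i+1) ≤ Qt x y (i+1) 0 := Qe_le _ _ _ _ hn
        rw [Qt_zero hn x y (i+1)] at h1
        have h2 : min (x (i+1)) (y (i+2)) ≤ y (i+2) := min_le_right _ _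
        have e : i + 1 + 1 = i + 2 := by ring
        rw [e] at h1
        omega
      · have hr := hB4 i (k₁-1) (by omega)
        have e1 : k₁ - 1 + 1 = k₁ := by omega
        rw [e1] at hr
        have h1 : Qe x y (i+1) ≤ Qt x y (i+1) (k₁-1) := Qe_le _ _ _ _ (by omega)
        rw [hr] at h1
        have h2 : min (x (i+1)) (y (i+2)) ≤ x (i+1) := min_le_left _ _
        omega
    have hR2 : Qe x y (i+1) + min (x (i+1)) (y (i+2)) ≤ x (i+2) + Qt x y (i+2) k₂ := by
      rcases Nat.lt_or_ge (k₂+1) n with hlt | hge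
      · have hr := hB4 (i+1) k₂ hlt
        have e2 : i + 1 + 1 = i + 2 := by ring
        rw [e2] at hr
        have h1 : Qe x y (i+1) ≤ Qt x y (i+1) (k₂+1) := Qe_le _ _ _ _ hlt
        have h2 : min (x (i+1)) (y (i+2)) ≤ y (i+2) := min_le_right _ _
        omega
      · have hk2 : k₂ = n - 1 := by omega
        subst hk2
        rw [Qt_last hn x y (i+2)]
        have h1 : Qe x y (i+1) ≤ Qt x y (i+1) (n-1) := Qe_le _ _ _ _ (by omega)
        rw [Qt_last hn x y (i+1)] at h1
        have h2 : min (x (i+1)) (y (i+2)) ≤ x (i+1) := min_le_left _ _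
        omega
    have e1 : Qe x y i = Qt x y i k₁ := le_antisymm (Qe_le _ _ _ _ hk₁) hle₁
    have e2 : Qe x y (i+2) = Qt x y (i+2) k₂ := le_antisymm (Qe_le _ _ _ _ hk₂) hle₂
    rw [le_min_iff]
    constructor
    · rw [e1]; exact hR1
    · rw [e2]; exact hR2

/-! odd-index analysis -/

lemma T_zero_odd (hev : 2 ∣ n) (hn2 : 2 ≤ n) (x y : V n) (i : ZMod n) (hi : i.val % 2 = 1) :
    Qt (sw12 (vb x y)) (ub x y) i 0 =
      Sv y - y i + qq x y i - qq x y (i + 1) := by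
  have hn : 0 < n := by omega
  rw [Tform hev hn2 x y i 0 hn, Qt_zero hn x y i]
  unfold Ecor Cc
  rw [if_pos hi, if_neg (by omega : ¬ (i.val + 0) % 2 = 0)]
  have E : ∀ z : ZMod n → ℤ, z (i + ((0:ℕ) : ZMod n) + 1) = z (i + 1) := by
    intro z; congr 1; push_cast; ring
  have E2 : ∀ z : ZMod n → ℤ, z (i + ((0:ℕ) : ZMod n)) = z i := by
    intro z; congr 1; push_cast; ring
  have E3 : ∀ z : ZMod n → ℤ, z (i + ((0:ℕ) : ZMod n) - 1) = z (i - 1) := by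
    intro z; congr 1; push_cast; ring
  simp only [E, E2, E3]
  ring

lemma T_last_odd (hev : 2 ∣ n) (hn2 : 2 ≤ n) (x y : V n) (i : ZMod n) (hi : i.val % 2 = 1) :
    Qt (sw12 (vb x y)) (ub x y) i (n - 1) =
      Sv x - x (i + 1) + qq x y i - qq x y (i + 1) := by
  have hn : 0 < n := by omega
  have hpar : (i.val + (n - 1)) % 2 = 0 := by
    rcases hev with ⟨m, hm⟩; omega
  rw [Tform hev hn2 x y i (n-1) (by omega), Qt_last hn x y i]
  unfold Ecor Cc
  rw [if_pos hi, if_pos hpar]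
  have hcast : ((n - 1 : ℕ) : ZMod n) = -1 := by
    have h0 : ((n : ℕ) : ZMod n) = 0 := ZMod.natCast_self n
    push_cast [Nat.cast_sub (by omega : 1 ≤ n), h0]; ring
  rw [hcast]
  have E1 : ∀ z : ZMod n → ℤ, z (i + -1 + 1) = z i := by intro z; congr 1; ring
  have E2 : ∀ z : ZMod n → ℤ, z (i + -1 + 2) = z (i + 1) := by intro z; congr 1; ring
  have E3 : ∀ z : ZMod n → ℤ, z (i + -1) = z (i - 1) := by intro z; congr 1; ring
  simp only [E1, E2, E3]
  ring

/-- `F4a`: block description of the transformed `Qe` at odd `i`. -/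
lemma Qpp_odd (hev : 2 ∣ n) (hn4 : 4 ≤ n) (x y : V n) (i : ZMod n) (hi : i.val % 2 = 1)
    (hne : (Finset.Ico 1 (n-1)).Nonempty) :
    Qe (sw12 (vb x y)) (ub x y) i =
      min (Cc x y i + (Finset.Ico 1 (n-1)).inf' hne (Qt x y i))
        (qq x y i - qq x y (i + 1) + min (Sv x - x (i + 1)) (Sv y - y i)) := by
  have hn : 0 < n := by omega
  have hn2 : 2 ≤ n := by omega
  set M := (Finset.Ico 1 (n-1)).inf' hne (Qt x y i) with hM
  -- block start selector for interior k
  have key : ∀ k, 1 ≤ k → k ≤ n - 2 → ∃ t, 1 ≤ t ∧ t + 1 ≤ n - 2 ∧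
      (i.val + t) % 2 = 0 ∧ (k = t ∨ k = t + 1) := by
    intro k hk1 hk2
    rcases Nat.even_or_odd k with he | ho
    · refine ⟨k - 1, by rcases he with ⟨a,ha⟩; omega, by omega, ?_, Or.inr (by
        rcases he with ⟨a,ha⟩; omega)⟩
      rcases he with ⟨a, ha⟩; omega
    · refine ⟨k, by omega, ?_, ?_, Or.inl rfl⟩
      · rcases hev with ⟨m, hm⟩; rcases ho with ⟨a, ha⟩; omega
      · rcases ho with ⟨a, ha⟩; omega
  apply le_antisymm
  · rw [le_min_iff]
    constructor
    · -- Qe'' ≤ Cc + M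
      have h1 : Qe (sw12 (vb x y)) (ub x y) i - Cc x y i ≤ M := by
        apply Finset.le_inf'
        intro k hkmem
        obtain ⟨hk1, hk2⟩ := Finset.mem_Ico.1 hkmem
        obtain ⟨t, ht1, ht2, ht3, ht4⟩ := key k hk1 (by omega)
        have hb := block_min hev hn2 x y i t (by omega) ht3
        rw [if_pos hi] at hb
        have h2 : Qe (sw12 (vb x y)) (ub x y) i ≤
            min (Qt (sw12 (vb x y)) (ub x y) i t) (Qt (sw12 (vb x y)) (ub x y) i (t+1)) :=
          le_min (Qe_le _ _ _ _ (by omega)) (Qe_le _ _ _ _ (by omega))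
        rw [hb] at h2
        rcases ht4 with rfl | rfl
        · have := min_le_left (Qt x y i k) (Qt x y i (k+1)); omega
        · have := min_le_right (Qt x y i t) (Qt x y i (t+1)); omega
      omega
    · -- Qe'' ≤ wrap
      have h0 := Qe_le (sw12 (vb x y)) (ub x y) i 0 hn
      have hl := Qe_le (sw12 (vb x y)) (ub x y) i (n-1) (by omega)
      rw [T_zero_odd hev hn2 x y i hi] at h0
      rw [T_last_odd hev hn2 x y i hi] at hl
      rcases le_total (Sv x - x (i+1)) (Sv y - y i) with h | h
      · rw [min_eq_left h]; omega
      · rw [min_eq_right h]; omega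
  · apply le_Qe _ _ _ _ _ hn
    intro k hk
    rcases Nat.eq_zero_or_pos k with rfl | hk1
    · rw [T_zero_odd hev hn2 x y i hi]
      have h2 : min (Sv x - x (i+1)) (Sv y - y i) ≤ Sv y - y i := min_le_right _ _
      have h3 : min (Cc x y i + M) (qq x y i - qq x y (i + 1) +
          min (Sv x - x (i + 1)) (Sv y - y i)) ≤ qq x y i - qq x y (i + 1) +
          min (Sv x - x (i + 1)) (Sv y - y i) := min_le_right _ _
      omega
    rcases Nat.lt_or_ge k (n-1) with hk2 | hk2
    · -- interior
      obtain ⟨t, ht1, ht2, ht3, ht4⟩ := key k hk1 (by omega)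
      have hb := block_min hev hn2 x y i t (by omega) ht3
      rw [if_pos hi] at hb
      have hm1 : M ≤ Qt x y i t := Finset.inf'_le _ (Finset.mem_Ico.2 ⟨ht1, by omega⟩)
      have hm2 : M ≤ Qt x y i (t+1) := Finset.inf'_le _ (Finset.mem_Ico.2 ⟨by omega, by omega⟩)
      have h4 : Cc x y i + M ≤
          min (Qt (sw12 (vb x y)) (ub x y) i t) (Qt (sw12 (vb x y)) (ub x y) i (t+1)) := by
        rw [hb]
        rcases le_total (Qt x y i t) (Qt x y i (t+1)) with h | h
        · rw [min_eq_left h]; omega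
        · rw [min_eq_right h]; omega
      have h5 : min (Cc x y i + M) (qq x y i - qq x y (i + 1) +
          min (Sv x - x (i + 1)) (Sv y - y i)) ≤ Cc x y i + M := min_le_left _ _
      rcases ht4 with rfl | rfl
      · have := min_le_left (Qt (sw12 (vb x y)) (ub x y) i k)
          (Qt (sw12 (vb x y)) (ub x y) i (k+1)); omega
      · have := min_le_right (Qt (sw12 (vb x y)) (ub x y) i t)
          (Qt (sw12 (vb x y)) (ub x y) i (t+1)); omega
    · -- k = n-1
      have hkn : k = n - 1 := by omega
      subst hkn
      rw [T_last_odd hev hn2 x y i hi]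
      have h2 : min (Sv x - x (i+1)) (Sv y - y i) ≤ Sv x - x (i+1) := min_le_left _ _
      have h3 : min (Cc x y i + M) (qq x y i - qq x y (i + 1) +
          min (Sv x - x (i + 1)) (Sv y - y i)) ≤ qq x y i - qq x y (i + 1) +
          min (Sv x - x (i + 1)) (Sv y - y i) := min_le_right _ _
      omega

/-- decomposition of `Qe x y (i-1)`. -/
lemma Qdec_minus (hn4 : 4 ≤ n) (x y : V n) (i : ZMod n)
    (hne : (Finset.Ico 1 (n-1)).Nonempty) :
    Qe x y (i - 1) =
      min (Sv y - y i)
        (x i - y i + min (Sv y - y (i+1)) ((Finset.Ico 1 (n-1)).inf' hne (Qt x y i))) := by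
  have hn : 0 < n := by omega
  set M := (Finset.Ico 1 (n-1)).inf' hne (Qt x y i) with hM
  have hshift : ∀ k : ℕ, k + 1 < n → Qt x y i k = Qt x y (i-1) (k+1) - x i + y i := by
    intro k hk
    have := Qt_shift hn x y (i-1) k hk
    have e : i - 1 + 1 = i := by ring
    rw [e] at this
    exact this
  apply le_antisymm
  · rw [le_min_iff]
    constructor
    · have h := Qe_le x y (i-1) 0 hn
      rw [Qt_zero hn x y (i-1)] at h
      have e : i - 1 + 1 = i := by ring
      rw [e] at h
      exact h
    · have hA : Qe x y (i-1) ≤ x i - y i + (Sv y - y (i+1)) := by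
        have h := Qe_le x y (i-1) 1 (by omega)
        have h0 := hshift 0 (by omega)
        rw [Qt_zero hn x y i] at h0
        norm_num at h0
        omega
      have hB : Qe x y (i-1) ≤ x i - y i + M := by
        obtain ⟨k', hk'mem, hk'⟩ := Finset.exists_mem_eq_inf' hne (Qt x y i)
        obtain ⟨h1, h2⟩ := Finset.mem_Ico.1 hk'mem
        have h := Qe_le x y (i-1) (k'+1) (by omega)
        have hs := hshift k' (by omega)
        rw [← hM] at hk'
        omega
      rcases le_total (Sv y - y (i+1)) M with h | h
      · rw [min_eq_left h]; exact hA
      · rw [min_eq_right h]; exact hB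
  · apply le_Qe _ _ _ _ _ hn
    intro k hk
    rcases Nat.eq_zero_or_pos k with rfl | hk1
    · rw [Qt_zero hn x y (i-1)]
      have e : i - 1 + 1 = i := by ring
      rw [e]
      exact min_le_left _ _
    · have hs := hshift (k-1) (by omega)
      have e1 : k - 1 + 1 = k := by omega
      rw [e1] at hs
      rcases Nat.eq_zero_or_pos (k-1) with h0 | hpos
      · rw [h0] at hs
        rw [Qt_zero hn x y i] at hs
        have := min_le_right (Sv y - y i)
          (x i - y i + min (Sv y - y (i+1)) M)
        have h2 : min (Sv y - y (i+1)) M ≤ Sv y - y (i+1) := min_le_left _ _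
        omega
      · have hm : M ≤ Qt x y i (k-1) :=
          Finset.inf'_le _ (Finset.mem_Ico.2 ⟨hpos, by omega⟩)
        have := min_le_right (Sv y - y i)
          (x i - y i + min (Sv y - y (i+1)) M)
        have h2 : min (Sv y - y (i+1)) M ≤ M := min_le_right _ _
        omega

/-- decomposition of `Qe x y (i+1)`. -/
lemma Qdec_plus (hn4 : 4 ≤ n) (x y : V n) (i : ZMod n)
    (hne : (Finset.Ico 1 (n-1)).Nonempty) :
    Qe x y (i + 1) =
      min (Sv x - x (i+1))
        (y (i+1) - x (i+1) + min ((Finset.Ico 1 (n-1)).inf' hne (Qt x y i)) (Sv x - x i)) := by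
  have hn : 0 < n := by omega
  set M := (Finset.Ico 1 (n-1)).inf' hne (Qt x y i) with hM
  have hshift : ∀ k : ℕ, k + 1 < n → Qt x y (i+1) k = Qt x y i (k+1) - x (i+1) + y (i+1) :=
    fun k hk => Qt_shift hn x y i k hk
  apply le_antisymm
  · rw [le_min_iff]
    constructor
    · have h := Qe_le x y (i+1) (n-1) (by omega)
      rw [Qt_last hn x y (i+1)] at h
      exact h
    · have hA : Qe x y (i+1) ≤ y (i+1) - x (i+1) + M := by
        obtain ⟨k', hk'mem, hk'⟩ := Finset.exists_mem_eq_inf' hne (Qt x y i)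
        obtain ⟨h1, h2⟩ := Finset.mem_Ico.1 hk'mem
        have h := Qe_le x y (i+1) (k'-1) (by omega)
        have hs := hshift (k'-1) (by omega)
        have e1 : k' - 1 + 1 = k' := by omega
        rw [e1] at hs
        rw [← hM] at hk'
        omega
      have hB : Qe x y (i+1) ≤ y (i+1) - x (i+1) + (Sv x - x i) := by
        have h := Qe_le x y (i+1) (n-2) (by omega)
        have hs := hshift (n-2) (by omega)
        have e1 : n - 2 + 1 = n - 1 := by omega
        rw [e1] at hs
        rw [Qt_last hn x y i] at hs
        omega
      rcases le_total M (Sv x - x i) with h | h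
      · rw [min_eq_left h]; exact hA
      · rw [min_eq_right h]; exact hB
  · apply le_Qe _ _ _ _ _ hn
    intro k hk
    rcases Nat.lt_or_ge k (n-1) with hk2 | hk2
    · have hs := hshift k (by omega)
      rcases Nat.lt_or_ge (k+1) (n-1) with h3 | h3
      · have hm : M ≤ Qt x y i (k+1) :=
          Finset.inf'_le _ (Finset.mem_Ico.2 ⟨by omega, by omega⟩)
        have := min_le_right (Sv x - x (i+1))
          (y (i+1) - x (i+1) + min M (Sv x - x i))
        have h2 : min M (Sv x - x i) ≤ M := min_le_left _ _
        omega
      · have hkn : k + 1 = n - 1 := by omega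
        rw [hkn, Qt_last hn x y i] at hs
        have := min_le_right (Sv x - x (i+1))
          (y (i+1) - x (i+1) + min M (Sv x - x i))
        have h2 : min M (Sv x - x i) ≤ Sv x - x i := min_le_right _ _
        omega
    · have hkn : k = n - 1 := by omega
      subst hkn
      rw [Qt_last hn x y (i+1)]
      exact min_le_left _ _

set_option maxHeartbeats 2000000 in
/-- `F4`: the transformed `Qe` at odd `i`. -/
lemma Qpp_odd' (hev : 2 ∣ n) (hn4 : 4 ≤ n) (x y : V n) (i : ZMod n) (hi : i.val % 2 = 1) :
    Qe (sw12 (vb x y)) (ub x y) i =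
      min (Qe x y (i - 1) + y (i + 1)) (Qe x y (i + 1) + x i)
        + qq x y i - qq x y (i - 1) - qq x y (i + 1) := by
  have hn : 0 < n := by omega
  have hne : (Finset.Ico 1 (n-1)).Nonempty := ⟨1, Finset.mem_Ico.2 ⟨le_rfl, by omega⟩⟩
  rw [Qpp_odd hev hn4 x y i hi hne, Qdec_minus hn4 x y i hne, Qdec_plus hn4 x y i hne]
  have him1 : (i - 1).val % 2 = 0 := by
    rw [sub_one_val_mod2 hev hn]; omega
  have hqi : qq x y i = min (x (i+1)) (y i) := qq_odd x y hev hn i hi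
  have hqm : qq x y (i-1) = min (x i) (y (i+1)) := by
    rw [qq_even x y hev hn (i-1) him1]
    have e1 : i - 1 + 1 = i := by ring
    have e2 : i - 1 + 2 = i + 1 := by ring
    rw [e1, e2]
  rw [hqi, hqm]
  unfold Cc
  rw [hqi, hqm]
  generalize (Finset.Ico 1 (n-1)).inf' hne (Qt x y i) = M
  generalize qq x y (i+1) = Q1
  generalize x i = u, x (i+1) = a, y i = w, y (i+1) = b, Sv x = X, Sv y = Y
  simp only [min_def]
  split_ifs <;> omega

/-! P-facts for the left-hand side -/

def Rb1 (x y : V n) : V n := fun i => y i + Qe x y (i - 1) - Qe x y i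
def Rb2 (x y : V n) : V n := fun i => x i + Qe x y i - Qe x y (i - 1)

lemma Pfact_even (hev : 2 ∣ n) (hn2 : 2 ≤ n) (x y : V n) (i : ZMod n) (hi : i.val % 2 = 0) :
    Pe (Rb1 x y) (sw12 (Rb2 x y)) i = qq x y i := by
  have hn : 0 < n := by omega
  have h1 : (i + 1).val % 2 = 1 := by rw [parity_add_one hev hn]; omega
  unfold Pe
  rw [sw12_odd (Rb2 x y) _ h1]
  unfold Rb1 Rb2
  have e1 : i + 1 - 1 = i := by ring
  have e2 : i + 1 + 1 = i + 2 := by ring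
  have e3 : i + 2 - 1 = i + 1 := by ring
  rw [e1, e2, e3]
  rw [qq_even x y hev hn i hi]
  have hrec := Qrec hn2 x y i
  rcases le_total (y (i+1) + Qe x y i) (x (i+2) + Qe x y (i+2)) with h | h
  · rw [min_eq_left h] at hrec
    rcases le_total (x (i+1)) (y (i+2)) with h2 | h2 <;>
      [rw [min_eq_left h2] at hrec ⊢; rw [min_eq_right h2] at hrec ⊢] <;>
    · rw [min_eq_left (by omega)]
      omega
  · rw [min_eq_right h] at hrec
    rcases le_total (x (i+1)) (y (i+2)) with h2 | h2 <;>
      [rw [min_eq_left h2] at hrec ⊢; rw [min_eq_right h2] at hrec ⊢] <;>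
    · rw [min_eq_right (by omega)]
      omega

lemma Pfact_odd (hev : 2 ∣ n) (hn2 : 2 ≤ n) (x y : V n) (i : ZMod n) (hi : i.val % 2 = 1) :
    Pe (Rb1 x y) (sw12 (Rb2 x y)) i =
      min (Qe x y (i-1) + y (i+1)) (Qe x y (i+1) + x i)
        + Qe x y i - Qe x y (i-1) - Qe x y (i+1) := by
  have hn : 0 < n := by omega
  have h1 : (i + 1).val % 2 = 0 := by rw [parity_add_one hev hn]; omega
  unfold Pe
  rw [sw12_even (Rb2 x y) _ h1]
  unfold Rb1 Rb2
  have e1 : i + 1 - 1 = i := by ring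
  rw [e1]
  rcases le_total (Qe x y (i-1) + y (i+1)) (Qe x y (i+1) + x i) with h | h
  · rw [min_eq_left h, min_eq_left (by omega)]; ring
  · rw [min_eq_right h, min_eq_right (by omega)]; ring



/-! top-level component identities -/

lemma comp_W (hev : 2 ∣ n) (hn4 : 4 ≤ n) (x y : V n) (i : ZMod n) :
    (Rvbar (Rb1 x y) (sw12 (Rb2 x y))).1 i =
      (Rvvbar (ub x y) (sw12 (vb x y))).1 i := by
  have hn0 : 0 < n := by omega
  have hn2 : 2 ≤ n := by omega
  show sw12 (Rb2 x y) i + Pe (Rb1 x y) (sw12 (Rb2 x y)) i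
      - Pe (Rb1 x y) (sw12 (Rb2 x y)) (i - 1)
    = sw12 (vb x y) i + Qe (sw12 (vb x y)) (ub x y) i
      - Qe (sw12 (vb x y)) (ub x y) (i - 1)
  rcases Nat.even_or_odd i.val with he | ho
  · have hi : i.val % 2 = 0 := by rcases he with ⟨a,ha⟩; omega
    have him1 : (i - 1).val % 2 = 1 := by rw [sub_one_val_mod2 hev hn0]; omega
    rw [sw12_even (Rb2 x y) i hi, sw12_even (vb x y) i hi]
    rw [Pfact_even hev hn2 x y i hi, Pfact_odd hev hn2 x y (i-1) him1]
    rw [Qpp_even hev hn2 x y i hi, Qpp_odd' hev hn4 x y (i-1) him1]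
    unfold Rb2 vb
    have E : ∀ z : ZMod n → ℤ, z (i - 1 + 1) = z i := by intro z; congr 1; ring
    simp only [E]
    omega
  · have hi : i.val % 2 = 1 := by rcases ho with ⟨a,ha⟩; omega
    have him1 : (i - 1).val % 2 = 0 := by rw [sub_one_val_mod2 hev hn0]; omega
    rw [sw12_odd (Rb2 x y) i hi, sw12_odd (vb x y) i hi]
    rw [Pfact_odd hev hn2 x y i hi, Pfact_even hev hn2 x y (i-1) him1]
    rw [Qpp_odd' hev hn4 x y i hi, Qpp_even hev hn2 x y (i-1) him1]
    unfold Rb2 vb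
    have E : ∀ z : ZMod n → ℤ, z (i + 1 - 1) = z i := by intro z; congr 1; ring
    simp only [E]
    omega

lemma comp_Z (hev : 2 ∣ n) (hn4 : 4 ≤ n) (x y : V n) (i : ZMod n) :
    sw12 ((Rvbar (Rb1 x y) (sw12 (Rb2 x y))).2) i =
      (Rvvbar (ub x y) (sw12 (vb x y))).2 i := by
  have hn0 : 0 < n := by omega
  have hn2 : 2 ≤ n := by omega
  have hrhs : (Rvvbar (ub x y) (sw12 (vb x y))).2 i
      = ub x y i + Qe (sw12 (vb x y)) (ub x y) (i - 1)
        - Qe (sw12 (vb x y)) (ub x y) i := rfl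
  rw [hrhs]
  rcases Nat.even_or_odd i.val with he | ho
  · have hi : i.val % 2 = 0 := by rcases he with ⟨a,ha⟩; omega
    have him1 : (i - 1).val % 2 = 1 := by rw [sub_one_val_mod2 hev hn0]; omega
    have him2 : (i - 1 - 1).val % 2 = 0 := by
      rw [sub_one_val_mod2 hev hn0]; omega
    rw [sw12_even _ i hi]
    have hlhs : (Rvbar (Rb1 x y) (sw12 (Rb2 x y))).2 (i - 1)
        = Rb1 x y (i-1) + Pe (Rb1 x y) (sw12 (Rb2 x y)) (i-1)
          - Pe (Rb1 x y) (sw12 (Rb2 x y)) (i-1-1) := rfl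
    rw [hlhs]
    rw [Pfact_odd hev hn2 x y (i-1) him1, Pfact_even hev hn2 x y (i-1-1) him2]
    rw [Qpp_odd' hev hn4 x y (i-1) him1, Qpp_even hev hn2 x y i hi]
    unfold Rb1 ub
    rw [sw12_even y i hi]
    have E : ∀ z : ZMod n → ℤ, z (i - 1 + 1) = z i := by intro z; congr 1; ring
    simp only [E]
    omega
  · have hi : i.val % 2 = 1 := by rcases ho with ⟨a,ha⟩; omega
    have hip1 : (i + 1).val % 2 = 0 := by rw [parity_add_one hev hn0]; omega
    have him1 : (i - 1).val % 2 = 0 := by rw [sub_one_val_mod2 hev hn0]; omega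
    rw [sw12_odd _ i hi]
    have hlhs : (Rvbar (Rb1 x y) (sw12 (Rb2 x y))).2 (i + 1)
        = Rb1 x y (i+1) + Pe (Rb1 x y) (sw12 (Rb2 x y)) (i+1)
          - Pe (Rb1 x y) (sw12 (Rb2 x y)) (i+1-1) := rfl
    rw [hlhs]
    have E : ∀ z : ZMod n → ℤ, z (i + 1 - 1) = z i := by intro z; congr 1; ring
    simp only [E]
    rw [Pfact_even hev hn2 x y (i+1) hip1, Pfact_odd hev hn2 x y i hi]
    rw [Qpp_odd' hev hn4 x y i hi, Qpp_even hev hn2 x y (i-1) him1]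
    unfold Rb1 ub
    rw [sw12_odd y i hi]
    simp only [E]
    omega

end BBS

namespace BBS

/-- Proposition 2.2, eq. (2.10), `κ =` Switch₁₂.
For every even `n ≥ 4`, all `l, m ≥ 0`, all `d, e ∈ ℤ`, and all `x ∈ B_l`, `y ∈ B_m`,
the composites `K₂ ∘ R∨ ∘ K₂ ∘ R` and `R∨∨ ∘ K₂ ∘ R∨ ∘ K₂` take the same value on
`z^d x ⊗ z^e y`. -/
theorem reflection_equation_right_switch12
    (n : ℕ) (hn : 4 ≤ n) (hev : Even n) (l m : ℕ) (d e : ℤ) (x y : V n)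
    (hx : memB l x) (hy : memB m y) :
    K2 sw12 I12 (Rvee (K2 sw12 I12 (Raff ((d, x), (e, y))))) =
      Rvv (K2 sw12 I12 (Rvee (K2 sw12 I12 ((d, x), (e, y))))) := by
  have hev2 : 2 ∣ n := hev.two_dvd
  have hn0 : 0 < n := by omega
  have hn2 : 2 ≤ n := by omega
  haveI : NeZero n := ⟨by omega⟩
  have h0e : ((0 : ZMod n)).val % 2 = 0 := by simp [ZMod.val_zero]
  have hru : (Rvbar x (sw12 y)).1 = ub x y := rfl
  have hrv : (Rvbar x (sw12 y)).2 = vb x y := rfl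
  have hr1 : (Rbar x y).1 = Rb1 x y := rfl
  have hr2 : (Rbar x y).2 = Rb2 x y := rfl
  have hpq : Pe x (sw12 y) 0 = qq x y 0 := rfl
  have hP0 : Pe (Rb1 x y) (sw12 (Rb2 x y)) 0 = qq x y 0 :=
    Pfact_even hev2 hn2 x y 0 h0e
  have hQ0 : Qe (sw12 (vb x y)) (ub x y) 0 = Qe x y 0 :=
    Qpp_even hev2 hn2 x y 0 h0e
  simp only [K2, Kmap, Raff, Rvee, Rvv, I12, Prod.mk.injEq]
  rw [hru, hrv, hr1, hr2, hpq, hP0, hQ0]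
  refine ⟨⟨by ring, funext fun i => comp_W hev2 hn x y i⟩,
    by ring, funext fun i => comp_Z hev2 hn x y i⟩

end BBS
end

section
/- Tropical reflection equation for κ = Rotateleft: for every n ≥ 3, the two composite maps K₂ ∘ R∨ ∘ K₂ ∘ R and R∨∨ ∘ K₂ ∘ R∨ ∘ K₂ agree on all pairs ((t,x), (s,y)) with t, s ∈ ℝ_{>0} and x, y ∈ (ℝ_{>0})^n. -/
/- Tropical (geometric-lift) setting for the combinatorial R- and K-matrices of
Kuniba–Okado–Yamada, "Box-Ball System with Reflecting End", Appendix A.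
Vectors are real-valued, indexed by `ZMod n` (coordinates modulo `n`), and
`Qr x y i` is the subtraction-free polynomial
`Q_i(x,y) = Σ_{k=1}^{n} (Π_{j=1}^{k−1} x_{i+j}) (Π_{j=k+1}^{n} y_{i+j})`,
the geometric lift (by `(min,+) → (+,×)`) of the piecewise-linear energy. -/

namespace BBST

abbrev W (n : ℕ) := ZMod n → ℝ

variable {n : ℕ}

/-- The tropical energy polynomial
`Q_i(x,y) = Σ_{k=1}^{n} (Π_{j=1}^{k−1} x_{i+j}) · (Π_{j=k+1}^{n} y_{i+j})`. -/
def Qr (x y : W n) (i : ZMod n) : ℝ :=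
  ∑ k ∈ Finset.range n,
    (∏ j ∈ Finset.range k, x (i + (j : ZMod n) + 1)) *
      ∏ j ∈ Finset.Ico (k + 1) n, y (i + (j : ZMod n) + 1)

end BBST

namespace BBST

/-- Pairs `(t, x)` of a spectral parameter and a positive real vector. -/
abbrev AffR (n : ℕ) := ℝ × W n

/-- `P_i(x,y) = x_{i+1} + y_{i+1}`, the tropical energy of `R∨`. -/
def Pr (x y : W n) (i : ZMod n) : ℝ := x (i + 1) + y (i + 1)

/-- Tropical `R`: `((t,x),(s,y)) ↦ ((s/Q₀(x,y), ỹ), (t·Q₀(x,y), x̃))` with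
`x̃_i = x_i·Q_i(x,y)/Q_{i−1}(x,y)`, `ỹ_i = y_i·Q_{i−1}(x,y)/Q_i(x,y)`. -/
noncomputable def Rt (p : AffR n × AffR n) : AffR n × AffR n :=
  ((p.2.1 / Qr p.1.2 p.2.2 0,
      fun i => p.2.2 i * Qr p.1.2 p.2.2 (i - 1) / Qr p.1.2 p.2.2 i),
    (p.1.1 * Qr p.1.2 p.2.2 0,
      fun i => p.1.2 i * Qr p.1.2 p.2.2 i / Qr p.1.2 p.2.2 (i - 1)))

/-- Tropical `R∨`: `((t,x),(s,y)) ↦ ((s/P₀, ỹ), (t·P₀, x̃))` with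
`x̃_i = x_i·P_i/P_{i−1}`, `ỹ_i = y_i·P_i/P_{i−1}`. -/
noncomputable def Rvt (p : AffR n × AffR n) : AffR n × AffR n :=
  ((p.2.1 / Pr p.1.2 p.2.2 0,
      fun i => p.2.2 i * Pr p.1.2 p.2.2 i / Pr p.1.2 p.2.2 (i - 1)),
    (p.1.1 * Pr p.1.2 p.2.2 0,
      fun i => p.1.2 i * Pr p.1.2 p.2.2 i / Pr p.1.2 p.2.2 (i - 1)))

/-- Tropical `R∨∨`: `((t,x),(s,y)) ↦ ((s/Q₀(y,x), ỹ), (t·Q₀(y,x), x̃))` with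
`x̃_i = x_i·Q_{i−1}(y,x)/Q_i(y,x)`, `ỹ_i = y_i·Q_i(y,x)/Q_{i−1}(y,x)`. -/
noncomputable def Rvvt (p : AffR n × AffR n) : AffR n × AffR n :=
  ((p.2.1 / Qr p.2.2 p.1.2 0,
      fun i => p.2.2 i * Qr p.2.2 p.1.2 i / Qr p.2.2 p.1.2 (i - 1)),
    (p.1.1 * Qr p.2.2 p.1.2 0,
      fun i => p.1.2 i * Qr p.2.2 p.1.2 (i - 1) / Qr p.2.2 p.1.2 i))

/-- Tropical `K` for `κ =` Rotateleft: `(t,x) ↦ (1/(t·x_1), (x_2,…,x_n,x_1))`. -/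
noncomputable def Kt (q : AffR n) : AffR n := (1 / (q.1 * q.2 1), fun i => q.2 (i + 1))

/-- `K₂`: apply the tropical `K` to the second factor. -/
noncomputable def K2t (p : AffR n × AffR n) : AffR n × AffR n := (p.1, Kt p.2)

/-!
After `K₂ ∘ R` the `R∨`-energy is the same as after `K₂` alone, `P_i = x_{i+1} + y_{i+2}`:
this is the three-term recurrence `y_{i+1} Q_i + x_{i+2} Q_{i+2} = (x_{i+1} + y_{i+2}) Q_{i+1}`,
the difference of two instances of the exchange relation
`x_{i+1} Q_{i+1} + Π y = y_{i+1} Q_i + Π x`. On the other side, `K₂ ∘ R∨ ∘ K₂` acts on `(x, y)` by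
a gauge transformation with `P`, under which `Q_i` becomes `P_i Q_{i+1} / P_{i+1}` because the
products in `Q` telescope. With these two identities both composites are the same rational
expressions in `t, s, x, y, Q, P`.
-/

open Finset

section Sequences

variable {R : Type*} [CommSemiring R] {K : Type*} [Field K]

def qSum (n : ℕ) (a b : ℕ → R) : R :=
  ∑ k ∈ range n, (∏ j ∈ range k, a j) * ∏ j ∈ Ico (k + 1) n, b j

theorem qSum_exchange (n : ℕ) (a b : ℕ → R) (hb : b n = b 0) :
    a 0 * qSum n (fun j => a (j + 1)) (fun j => b (j + 1)) + ∏ j ∈ range n, b (j + 1)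
      = b 0 * qSum n a b + ∏ j ∈ range n, a j := by
  -- both sides equal `Σ_{k ≤ n} T k`, with its bottom and its top term split off respectively
  set T : ℕ → R := fun k => (∏ j ∈ range k, a j) * ∏ j ∈ Ico (k + 1) (n + 1), b j with hT
  have hshift : ∀ k ∈ range n,
      a 0 * ((∏ j ∈ range k, a (j + 1)) * ∏ j ∈ Ico (k + 1) n, b (j + 1)) = T (k + 1) := by
    intro k _
    simp only [hT]
    rw [prod_range_succ' a k, prod_Ico_add' b]
    ring
  have hwrap : ∀ k ∈ range n,
      b 0 * ((∏ j ∈ range k, a j) * ∏ j ∈ Ico (k + 1) n, b j) = T k := by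
    intro k hk
    simp only [hT]
    rw [prod_Ico_succ_top (mem_range.1 hk) b, hb]
    ring
  have hT0 : T 0 = ∏ j ∈ range n, b (j + 1) := by
    simp only [hT]
    rw [prod_range_zero, one_mul, range_eq_Ico, prod_Ico_add' b]
  have hTn : T n = ∏ j ∈ range n, a j := by
    simp only [hT]
    rw [Ico_self, prod_empty, mul_one]
  rw [qSum, qSum, mul_sum, mul_sum, sum_congr rfl hshift, sum_congr rfl hwrap, ← hT0, ← hTn,
    ← sum_range_succ', sum_range_succ]

theorem prod_Ico_div_telescope {g : ℕ → K} (hg : ∀ j, g j ≠ 0) {m n : ℕ} (hmn : m ≤ n) :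
    ∏ j ∈ Ico m n, g (j + 1) / g j = g n / g m := by
  induction n, hmn using Nat.le_induction with
  | base => rw [Ico_self, prod_empty, div_self (hg m)]
  | succ n hmn ih => rw [prod_Ico_succ_top hmn, ih, mul_comm, div_mul_div_cancel₀ (hg n)]

theorem qSum_gauge (n : ℕ) (a b g : ℕ → K) (hg : ∀ j, g j ≠ 0) :
    qSum n (fun j => a j * (g (j + 2) / g (j + 1))) (fun j => b j * (g (j + 1) / g j))
      = g n / g 1 * qSum n a b := by
  rw [qSum, qSum, mul_sum]
  refine sum_congr rfl fun k hk => ?_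
  have hk : k + 1 ≤ n := mem_range.1 hk
  rw [prod_mul_distrib, prod_mul_distrib, range_eq_Ico,
    prod_Ico_div_telescope (g := fun j => g (j + 1)) (fun j => hg _) k.zero_le,
    prod_Ico_div_telescope hg hk]
  field_simp [hg]

end Sequences

variable {n : ℕ}

theorem Qr_eq_qSum (x y : W n) (i : ZMod n) :
    Qr x y i = qSum n (fun j => x (i + j + 1)) (fun j => y (i + j + 1)) := rfl

theorem prod_range_add_natCast_add_one [NeZero n] {M : Type*} [CommMonoid M] (f : ZMod n → M)
    (c : ZMod n) : ∏ j ∈ range n, f (c + j + 1) = ∏ z, f z := by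
  refine prod_nbij' (fun j => c + j + 1) (fun z => (z - c - 1).val) (fun _ _ => mem_univ _)
    (fun z _ => mem_range.2 (ZMod.val_lt _)) (fun j hj => ?_) (fun z _ => ?_) (fun _ _ => rfl)
  · rw [show c + j + 1 - c - 1 = (j : ZMod n) by ring, ZMod.val_natCast_of_lt (mem_range.1 hj)]
  · rw [ZMod.natCast_zmod_val]; ring

theorem Qr_pos [NeZero n] {x y : W n} (hx : ∀ i, 0 < x i) (hy : ∀ i, 0 < y i) (i : ZMod n) :
    0 < Qr x y i :=
  sum_pos (fun _ _ => mul_pos (prod_pos fun _ _ => hx _) (prod_pos fun _ _ => hy _))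
    (nonempty_range_iff.2 (NeZero.ne n))

theorem Qr_exchange [NeZero n] (x y : W n) (i : ZMod n) :
    x (i + 1) * Qr x y (i + 1) + ∏ z, y z = y (i + 1) * Qr x y i + ∏ z, x z := by
  have h := qSum_exchange n (fun j => x (i + j + 1)) (fun j => y (i + j + 1)) (by simp)
  have hshift : ∀ (f : W n) (j : ℕ), f (i + ((j + 1 : ℕ) : ZMod n) + 1) = f (i + 1 + j + 1) :=
    fun f j => by push_cast; ring_nf
  simp only [hshift, Nat.cast_zero, add_zero, prod_range_add_natCast_add_one] at h
  exact h

theorem Qr_three_term_recurrence [NeZero n] (x y : W n) (i : ZMod n) :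
    y (i + 1) * Qr x y i + x (i + 1 + 1) * Qr x y (i + 1 + 1)
      = (x (i + 1) + y (i + 1 + 1)) * Qr x y (i + 1) := by
  linarith [Qr_exchange x y i, Qr_exchange x y (i + 1)]

theorem Qr_gauge_transform (x y P : W n) (hP : ∀ i, P i ≠ 0) (i : ZMod n) :
    Qr (fun m => x (m + 1) * P (m + 1) / P m) (fun m => y (m + 1) * P m / P (m - 1)) i
      = P i * Qr x y (i + 1) / P (i + 1) := by
  have h := qSum_gauge n (fun j => x (i + 1 + j + 1)) (fun j => y (i + 1 + j + 1))
    (fun j => P (i + j)) (fun _ => hP _)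
  simp only [ZMod.natCast_self, add_zero, Nat.cast_one] at h
  rw [Qr_eq_qSum _ _ i, mul_div_right_comm, Qr_eq_qSum x y (i + 1), ← h]
  congr 1 <;> funext j <;> push_cast <;> ring_nf

theorem Pr_K2t_Rt [NeZero n] {x y : W n} (hx : ∀ i, 0 < x i) (hy : ∀ i, 0 < y i) (t s : ℝ) :
    Pr (K2t (Rt ((t, x), (s, y)))).1.2 (K2t (Rt ((t, x), (s, y)))).2.2
      = Pr (K2t ((t, x), (s, y))).1.2 (K2t ((t, x), (s, y))).2.2 := by
  funext z
  simp only [Pr, K2t, Kt, Rt, add_sub_cancel_right]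
  rw [← add_div, Qr_three_term_recurrence, mul_div_cancel_right₀ _ (Qr_pos hx hy (z + 1)).ne']

theorem tropical_reflection_rotateleft_general (n : ℕ) (hn : 3 ≤ n)
    (t s : ℝ) (x y : W n)
    (hx : ∀ i, 0 < x i) (hy : ∀ i, 0 < y i) :
    K2t (Rvt (K2t (Rt ((t, x), (s, y))))) = Rvvt (K2t (Rvt (K2t ((t, x), (s, y))))) := by
  have : NeZero n := ⟨by omega⟩
  have hP : ∀ i, Pr x (fun i => y (i + 1)) i ≠ 0 := fun i => (add_pos (hx _) (hy _)).ne'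
  have hQ : ∀ i, Qr x y i ≠ 0 := fun i => (Qr_pos hx hy i).ne'
  have hPR := Pr_K2t_Rt hx hy t s
  have hgauge := Qr_gauge_transform x y _ hP
  simp only [K2t, Kt, Rt, add_sub_cancel_right] at hPR
  simp only [K2t, Kt, Rt, Rvt, Rvvt, add_sub_cancel_right, sub_add_cancel, sub_self, zero_add,
    Prod.mk.injEq, hPR, hgauge]
  refine ⟨⟨?_, funext fun i => ?_⟩, ?_, funext fun i => ?_⟩ <;> field_simp [hP, hQ]

/-- tropical reflection equation, `κ =` Rotateleft: for every `n ≥ 3`,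
the composites `K₂ ∘ R∨ ∘ K₂ ∘ R` and `R∨∨ ∘ K₂ ∘ R∨ ∘ K₂` agree on all pairs
`((t,x),(s,y))` with `t, s > 0` and `x, y` positive vectors. -/
theorem tropical_reflection_rotateleft (n : ℕ) (hn : 3 ≤ n)
    (t s : ℝ) (ht : 0 < t) (hs : 0 < s) (x y : W n)
    (hx : ∀ i, 0 < x i) (hy : ∀ i, 0 < y i) :
    K2t (Rvt (K2t (Rt ((t, x), (s, y))))) = Rvvt (K2t (Rvt (K2t ((t, x), (s, y))))) :=
  tropical_reflection_rotateleft_general n hn t s x y hx hy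

end BBST
end
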